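/- Let d ≥ 2 be an integer and 1 < b < (d+1)/(d−1) a real number. Let λ ∈ S¹ with λ ≠ 1 satisfy f_λ(λ) = 1 (so that 1 is a periodic point of f_λ of exact period 2, since f_λ(1) = λ), and suppose 1 is repelling, i.e. |(f_λ ∘ f_λ)'(1)| > 1. Then g(λ) + f'_λ(λ) ≠ 0, where g(z) = ((z+b)/(bz+1))^d. -/

import Mathlib

/-!
Since `f_λ(1) = λ`, the chain rule gives `(f_λ ∘ f_λ)'(1) = f'_λ(λ) · f'_λ(1)`, and
`|f'_λ(1)| = d (b - 1)/(b + 1) < 1` exactly because `b < (d+1)/(d-1)`. On the other hand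
`λ g(λ) = f_λ(λ) = 1` with `|λ| = 1` forces `|g(λ)| = 1`, so `g(λ) + f'_λ(λ) = 0` would give
`|f'_λ(λ)| = 1` and hence `|(f_λ ∘ f_λ)'(1)| < 1`, contradicting that `1` is repelling.
-/

open Complex

/-- The Ising recursion map `f_λ(z) = λ·((z+b)/(bz+1))^d`. -/
noncomputable def fIsing (d : ℕ) (b : ℝ) (lam z : ℂ) : ℂ :=
  lam * ((z + (b : ℂ)) / ((b : ℂ) * z + 1)) ^ d

/-- `g(z) = ((z+b)/(bz+1))^d`, so that `f_λ = λ·g`. -/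
noncomputable def gIsing (d : ℕ) (b : ℝ) (z : ℂ) : ℂ :=
  ((z + (b : ℂ)) / ((b : ℂ) * z + 1)) ^ d

theorem mul_add_one_ne_zero_of_norm_eq_one {b : ℝ} {z : ℂ} (hz : ‖z‖ = 1) (hb : |b| ≠ 1) :
    (b : ℂ) * z + 1 ≠ 0 := by
  intro h
  apply hb
  simpa [hz] using congrArg (‖·‖) (eq_neg_of_add_eq_zero_left h)

theorem one_add_ofReal_ne_zero {b : ℝ} (hb : b ≠ -1) : (1 : ℂ) + b ≠ 0 := by
  norm_cast
  contrapose! hb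
  linarith

theorem natCast_mul_sub_one_div_add_one_lt_one {d : ℕ} (hd : 2 ≤ d) {b : ℝ} (hb : -1 < b)
    (hbd : b < ((d : ℝ) + 1) / ((d : ℝ) - 1)) :
    (d : ℝ) * ((b - 1) / (b + 1)) < 1 := by
  have hd1 : (0 : ℝ) < d - 1 := by
    have : (2 : ℝ) ≤ d := by exact_mod_cast hd
    linarith
  have hbd' : b * (d - 1) < d + 1 := (lt_div_iff₀ hd1).mp hbd
  rw [← mul_div_assoc, div_lt_one (by linarith)]
  linarith

section IsingMap

variable (d : ℕ) (b : ℝ) (lam : ℂ)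

theorem fIsing_eq_mul_gIsing (z : ℂ) : fIsing d b lam z = lam * gIsing d b z := rfl

theorem hasDerivAt_fIsing {z : ℂ} (hz : (b : ℂ) * z + 1 ≠ 0) :
    HasDerivAt (fIsing d b lam)
      (lam * d * ((z + b) / (b * z + 1)) ^ (d - 1) * ((1 - b ^ 2) / (b * z + 1) ^ 2)) z := by
  have hnum : HasDerivAt (fun w : ℂ => w + b) 1 z := (hasDerivAt_id z).add_const _
  have hden : HasDerivAt (fun w : ℂ => b * w + 1) b z := by
    simpa using ((hasDerivAt_id z).const_mul (b : ℂ)).add_const (1 : ℂ)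
  exact (((hnum.fun_div hden hz).fun_pow d).const_mul lam).congr_deriv (by ring)

variable {b}

theorem fIsing_one (hb : b ≠ -1) : fIsing d b lam 1 = lam := by
  simp [fIsing, add_comm (b : ℂ) 1, div_self (one_add_ofReal_ne_zero hb)]

theorem deriv_fIsing_one (hb : b ≠ -1) :
    deriv (fIsing d b lam) 1 = lam * d * ((1 - b) / (1 + b)) := by
  have hb' := one_add_ofReal_ne_zero hb
  rw [(hasDerivAt_fIsing d b lam (z := 1) (by rwa [mul_one, add_comm])).deriv, mul_one,
    add_comm (b : ℂ) 1, div_self hb', one_pow, mul_one]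
  field_simp
  ring

theorem deriv_fIsing_comp_fIsing_one (hb : b ≠ -1) (hlam : (b : ℂ) * lam + 1 ≠ 0) :
    deriv (fun z => fIsing d b lam (fIsing d b lam z)) 1 =
      deriv (fIsing d b lam) lam * deriv (fIsing d b lam) 1 := by
  have h1 : (b : ℂ) * 1 + 1 ≠ 0 := by rw [mul_one, add_comm]; exact one_add_ofReal_ne_zero hb
  have hf : HasDerivAt (fIsing d b lam) (deriv (fIsing d b lam) lam) (fIsing d b lam 1) := by
    rw [fIsing_one d lam hb]
    exact (hasDerivAt_fIsing d b lam hlam).differentiableAt.hasDerivAt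
  exact (hf.comp 1 (hasDerivAt_fIsing d b lam h1).differentiableAt.hasDerivAt).deriv

theorem norm_deriv_fIsing_one (hb : 1 < b) :
    ‖deriv (fIsing d b lam) 1‖ = ‖lam‖ * d * ((b - 1) / (b + 1)) := by
  rw [deriv_fIsing_one d lam (by linarith), norm_mul, norm_mul, norm_natCast, norm_div,
    ← ofReal_one, ← ofReal_sub, ← ofReal_add, norm_real, norm_real, Real.norm_eq_abs,
    Real.norm_eq_abs, abs_of_neg (by linarith), abs_of_pos (by linarith), neg_sub, add_comm 1 b]

end IsingMap

theorem stmt14_general (d : ℕ) (hd : 2 ≤ d) (b : ℝ) (hb1 : 1 < b)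
    (hb2 : b < ((d : ℝ) + 1) / ((d : ℝ) - 1))
    (lam : ℂ) (hlam : lam ∈ Metric.sphere (0 : ℂ) 1)
    (hfix : fIsing d b lam lam = 1)
    (hrep : 1 < ‖deriv (fun z => fIsing d b lam (fIsing d b lam z)) 1‖) :
    gIsing d b lam + deriv (fIsing d b lam) lam ≠ 0 := by
  have hlam1 : ‖lam‖ = 1 := mem_sphere_zero_iff_norm.mp hlam
  have hb : b ≠ -1 := by linarith
  have hden : (b : ℂ) * lam + 1 ≠ 0 :=
    mul_add_one_ne_zero_of_norm_eq_one hlam1 (by rw [abs_of_pos (by linarith)]; linarith)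
  have hg : ‖gIsing d b lam‖ = 1 := by
    simpa [fIsing_eq_mul_gIsing, hlam1] using congrArg (‖·‖) hfix
  intro hsum
  have hfl : ‖deriv (fIsing d b lam) lam‖ = 1 := by
    rw [eq_neg_of_add_eq_zero_right hsum, norm_neg, hg]
  rw [deriv_fIsing_comp_fIsing_one d lam hb hden, norm_mul, hfl, one_mul,
    norm_deriv_fIsing_one d lam hb1, hlam1, one_mul] at hrep
  exact hrep.not_gt (natCast_mul_sub_one_div_add_one_lt_one hd (by linarith) hb2)

/-- Let `d ≥ 2` and `1 < b < (d+1)/(d−1)`.  If `λ ∈ S¹`, `λ ≠ 1`, `f_λ(λ) = 1` (so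
`1` is 2-periodic for `f_λ`) and `1` is repelling, i.e. `|(f_λ∘f_λ)'(1)| > 1`, then
`g(λ) + f'_λ(λ) ≠ 0`. -/
theorem stmt14 (d : ℕ) (hd : 2 ≤ d) (b : ℝ) (hb1 : 1 < b)
    (hb2 : b < ((d : ℝ) + 1) / ((d : ℝ) - 1))
    (lam : ℂ) (hlam : lam ∈ Metric.sphere (0 : ℂ) 1) (hne : lam ≠ 1)
    (hfix : fIsing d b lam lam = 1)
    (hrep : 1 < ‖deriv (fun z => fIsing d b lam (fIsing d b lam z)) 1‖) :
    gIsing d b lam + deriv (fIsing d b lam) lam ≠ 0 :=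
  stmt14_general d hd b hb1 hb2 lam hlam hfix hrep
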